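/- If {f_k}_{k=1}^m is a bi-stochastic measurement (Σ_k f_k* f_k = Id and Σ_k f_k f_k* = Id), and σ is a density matrix, then σ majorizes τ := Σ_k f_k σ f_k* in the majorization order on spectra: Sp(σ) ⪰ Sp(τ). -/

import Mathlib

open scoped ComplexOrder

open Matrix Finset in
/-- `u` rearranged in decreasing order. -/
noncomputable def sortDesc {n : ℕ} (u : Fin n → ℝ) : Fin n → ℝ :=
  fun i => u (Tuple.sort u i.rev)

open Finset in
/-- `u` majorizes `v`: every partial sum of the decreasing rearrangement of `u`
dominates that of `v`, and the total sums agree. -/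
noncomputable def Majorizes {n : ℕ} (u v : Fin n → ℝ) : Prop :=
  (∀ k : ℕ, ∑ i ∈ Finset.univ.filter (fun i : Fin n => (i : ℕ) < k), sortDesc v i ≤
      ∑ i ∈ Finset.univ.filter (fun i : Fin n => (i : ℕ) < k), sortDesc u i) ∧
  ∑ i, u i = ∑ i, v i

/-!
Ky Fan's principle: for Hermitian `σ` and `0 ≤ X ≤ 1` with `tr X = k`, `re tr(X σ)` is at most
the sum of the `k` largest eigenvalues of `σ` (in an eigenbasis of `σ` this is a linear program
in the diagonal of `X`). If `P` projects onto `k` eigenvectors of `τ = ∑ f σ f*`, then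
`tr(P τ) = tr(Φ*(P) σ)` for the dual channel `Φ*(P) = ∑ f* P f`, and `0 ≤ Φ*(P) ≤ 1` because
`∑ f* f = 1`, while `tr Φ*(P) = k` because `∑ f f* = 1`. So every partial sum of the spectrum of
`τ` is dominated by the corresponding one for `σ`; the totals agree as the channel preserves
traces.
-/

open Finset

section Sorting

variable {n : ℕ}

noncomputable def sortDescPerm (u : Fin n → ℝ) : Equiv.Perm (Fin n) :=
  Fin.revPerm.trans (Tuple.sort u)

lemma sortDesc_eq_comp (u : Fin n → ℝ) : sortDesc u = u ∘ sortDescPerm u := rfl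

lemma antitone_sortDesc (u : Fin n → ℝ) : Antitone (sortDesc u) := fun _ _ hij =>
  Tuple.monotone_sort u (Fin.rev_le_rev.mpr hij)

noncomputable def topSet (u : Fin n → ℝ) (k : ℕ) : Finset (Fin n) :=
  (univ.filter fun i : Fin n => (i : ℕ) < k).map (sortDescPerm u).toEmbedding

lemma sum_filter_lt_sortDesc (u : Fin n → ℝ) (k : ℕ) :
    ∑ i ∈ univ.filter (fun i : Fin n => (i : ℕ) < k), sortDesc u i = ∑ i ∈ topSet u k, u i := by
  rw [topSet, sum_map]
  rfl

lemma card_topSet (u : Fin n → ℝ) (k : ℕ) :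
    #(topSet u k) = #(univ.filter fun i : Fin n => (i : ℕ) < k) :=
  card_map _

lemma le_of_mem_topSet_of_notMem {u : Fin n → ℝ} {k : ℕ} {i j : Fin n} (hi : i ∈ topSet u k)
    (hj : j ∉ topSet u k) : u j ≤ u i := by
  simp only [topSet, mem_map_equiv, mem_filter, mem_univ, true_and, not_lt] at hi hj
  have hij : (sortDescPerm u).symm i ≤ (sortDescPerm u).symm j :=
    Fin.le_iff_val_le_val.mpr (by omega)
  simpa [sortDesc_eq_comp] using antitone_sortDesc u hij

end Sorting

section TopSum

variable {ι R : Type*} [Fintype ι]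

lemma exists_separating_threshold [LinearOrder R] [Nonempty R] (u : ι → R) {S : Finset ι}
    (hS : ∀ i ∈ S, ∀ j ∉ S, u j ≤ u i) : ∃ t, (∀ i ∈ S, t ≤ u i) ∧ ∀ j ∉ S, u j ≤ t := by
  rcases S.eq_empty_or_nonempty with rfl | hne
  · obtain ⟨t, ht⟩ := (Set.finite_range u).bddAbove
    exact ⟨t, by simp, fun j _ => ht ⟨j, rfl⟩⟩
  · obtain ⟨i₀, hi₀, hmin⟩ := S.exists_min_image u hne
    exact ⟨u i₀, hmin, fun j hj => hS i₀ hi₀ j hj⟩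

lemma sum_mul_le_sum_of_top [CommRing R] [LinearOrder R] [IsStrictOrderedRing R]
    (u d : ι → R) {S : Finset ι} (hd₀ : ∀ i, 0 ≤ d i) (hd₁ : ∀ i, d i ≤ 1)
    (hd : ∑ i, d i = #S) (hS : ∀ i ∈ S, ∀ j ∉ S, u j ≤ u i) :
    ∑ i, d i * u i ≤ ∑ i ∈ S, u i := by
  classical
  obtain ⟨t, htS, htSc⟩ := exists_separating_threshold u hS
  have hterm : ∀ i, d i * (u i - t) ≤ if i ∈ S then u i - t else 0 := by
    intro i
    split_ifs with hi
    · exact mul_le_of_le_one_left (sub_nonneg.mpr (htS i hi)) (hd₁ i)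
    · exact mul_nonpos_of_nonneg_of_nonpos (hd₀ i) (sub_nonpos.mpr (htSc i hi))
  calc ∑ i, d i * u i = ∑ i, d i * (u i - t) + (∑ i, d i) * t := by
        simp only [mul_sub, sum_sub_distrib, sum_mul]; ring
    _ ≤ ∑ i, (if i ∈ S then u i - t else 0) + #S * t := by
        rw [hd]; gcongr with i; exact hterm i
    _ = ∑ i ∈ S, u i := by
        rw [sum_ite_mem, univ_inter, sum_sub_distrib, sum_const, nsmul_eq_mul]; ring

end TopSum

namespace Matrix

open scoped MatrixOrder

variable {ι κ 𝕜 : Type*} [RCLike 𝕜]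

lemma re_diag_mem_Icc [DecidableEq ι] {Y : Matrix ι ι 𝕜} (hY₀ : 0 ≤ Y) (hY₁ : Y ≤ 1) (i : ι) :
    RCLike.re (Y i i) ∈ Set.Icc 0 1 := by
  have h₀ := (RCLike.nonneg_iff.mp ((nonneg_iff_posSemidef.mp hY₀).diag_nonneg (i := i))).1
  have h₁ := (RCLike.nonneg_iff.mp ((le_iff.mp hY₁).diag_nonneg (i := i))).1
  simp only [sub_apply, one_apply_eq, map_sub, RCLike.one_re, sub_nonneg] at h₁
  exact ⟨h₀, h₁⟩

variable [Fintype ι]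

section KrausSum

variable [Fintype κ] (f : κ → Matrix ι ι 𝕜)

lemma trace_mul_sum_mul_mul_conjTranspose (P M : Matrix ι ι 𝕜) :
    (P * ∑ k, f k * M * (f k)ᴴ).trace = ((∑ k, (f k)ᴴ * P * f k) * M).trace := by
  simp only [mul_sum, sum_mul, trace_sum]
  refine sum_congr rfl fun k _ => ?_
  rw [trace_mul_comm P, mul_assoc _ (f k), trace_mul_comm ((f k)ᴴ * P)]
  simp only [mul_assoc]

lemma trace_sum_mul_mul_conjTranspose [DecidableEq ι] (hf : ∑ k, (f k)ᴴ * f k = 1)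
    (M : Matrix ι ι 𝕜) : (∑ k, f k * M * (f k)ᴴ).trace = M.trace := by
  rw [trace_sum]
  simp_rw [trace_mul_cycle _ M]
  rw [← trace_sum, ← sum_mul, hf, Matrix.one_mul]

lemma trace_sum_conjTranspose_mul_mul [DecidableEq ι] (hf : ∑ k, f k * (f k)ᴴ = 1)
    (M : Matrix ι ι 𝕜) : (∑ k, (f k)ᴴ * M * f k).trace = M.trace := by
  simpa using trace_sum_mul_mul_conjTranspose (fun k => (f k)ᴴ) (by simpa using hf) M

variable {f}

lemma sum_conjTranspose_mul_mul_nonneg {P : Matrix ι ι 𝕜} (hP : 0 ≤ P) :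
    0 ≤ ∑ k, (f k)ᴴ * P * f k :=
  sum_nonneg fun k _ => star_left_conjugate_nonneg hP (f k)

lemma sum_conjTranspose_mul_mul_le_one [DecidableEq ι] (hf : ∑ k, (f k)ᴴ * f k = 1)
    {P : Matrix ι ι 𝕜} (hP : P ≤ 1) : ∑ k, (f k)ᴴ * P * f k ≤ 1 :=
  calc ∑ k, (f k)ᴴ * P * f k ≤ ∑ k, (f k)ᴴ * 1 * f k :=
        sum_le_sum fun k _ => star_left_conjugate_le_conjugate hP (f k)
    _ = 1 := by simpa using hf

end KrausSum

variable [DecidableEq ι]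

namespace IsHermitian

variable {A : Matrix ι ι 𝕜}

lemma trace_mul_eq_sum_diag_mul_eigenvalues (hA : A.IsHermitian) (X : Matrix ι ι 𝕜) :
    (X * A).trace = ∑ i, (star (hA.eigenvectorUnitary : Matrix ι ι 𝕜) * X *
      hA.eigenvectorUnitary) i i * hA.eigenvalues i := by
  conv_lhs => rw [hA.spectral_theorem, Unitary.conjStarAlgAut_apply]
  rw [← mul_assoc, ← mul_assoc, trace_mul_cycle, ← mul_assoc, trace]
  simp [mul_diagonal]

/-- Ky Fan's maximum principle. -/
theorem re_trace_mul_le_sum_eigenvalues (hA : A.IsHermitian) {X : Matrix ι ι 𝕜} (hX₀ : 0 ≤ X)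
    (hX₁ : X ≤ 1) {S : Finset ι} (hXS : X.trace = #S)
    (hS : ∀ i ∈ S, ∀ j ∉ S, hA.eigenvalues j ≤ hA.eigenvalues i) :
    RCLike.re (X * A).trace ≤ ∑ i ∈ S, hA.eigenvalues i := by
  set U : Matrix ι ι 𝕜 := ↑hA.eigenvectorUnitary
  set Y := star U * X * U
  have hY₀ : 0 ≤ Y := star_left_conjugate_nonneg hX₀ U
  have hY₁ : Y ≤ 1 := by simpa [U, Y] using star_left_conjugate_le_conjugate hX₁ U
  have hYS : ∑ i, RCLike.re (Y i i) = #S := by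
    have hYX : Y.trace = X.trace := by
      rw [trace_mul_cycle, Unitary.mul_star_self_of_mem hA.eigenvectorUnitary.2, Matrix.one_mul]
    simpa [trace] using congrArg RCLike.re (hYX.trans hXS)
  rw [trace_mul_eq_sum_diag_mul_eigenvalues hA]
  simp only [map_sum, RCLike.re_mul_ofReal]
  exact sum_mul_le_sum_of_top _ _ (fun i => (re_diag_mem_Icc hY₀ hY₁ i).1)
    (fun i => (re_diag_mem_Icc hY₀ hY₁ i).2) hYS hS

noncomputable def eigenprojection (hA : A.IsHermitian) (S : Finset ι) : Matrix ι ι 𝕜 :=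
  (hA.eigenvectorUnitary : Matrix ι ι 𝕜) * diagonal (fun i => if i ∈ S then 1 else 0) *
    star (hA.eigenvectorUnitary : Matrix ι ι 𝕜)

lemma eigenprojection_nonneg (hA : A.IsHermitian) (S : Finset ι) : 0 ≤ hA.eigenprojection S :=
  star_right_conjugate_nonneg (nonneg_iff_posSemidef.mpr <| posSemidef_diagonal_iff.mpr
    fun i => by split_ifs <;> simp) _

lemma eigenprojection_le_one (hA : A.IsHermitian) (S : Finset ι) : hA.eigenprojection S ≤ 1 := by
  have hdiag : diagonal (fun i => if i ∈ S then (1 : 𝕜) else 0) ≤ 1 := by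
    rw [le_iff, ← diagonal_one, diagonal_sub, posSemidef_diagonal_iff]
    intro i
    split_ifs <;> simp
  rw [eigenprojection]
  simpa [Unitary.mul_star_self_of_mem hA.eigenvectorUnitary.2] using
    star_right_conjugate_le_conjugate hdiag (hA.eigenvectorUnitary : Matrix ι ι 𝕜)

lemma trace_eigenprojection (hA : A.IsHermitian) (S : Finset ι) :
    (hA.eigenprojection S).trace = #S := by
  rw [eigenprojection, trace_mul_cycle, Unitary.star_mul_self_of_mem hA.eigenvectorUnitary.2,
    Matrix.one_mul, trace_diagonal, sum_boole]
  simp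

lemma trace_eigenprojection_mul (hA : A.IsHermitian) (S : Finset ι) :
    (hA.eigenprojection S * A).trace = ∑ i ∈ S, (hA.eigenvalues i : 𝕜) := by
  have hU := Unitary.star_mul_self_of_mem hA.eigenvectorUnitary.2
  rw [trace_mul_eq_sum_diag_mul_eigenvalues hA, eigenprojection]
  simp [← mul_assoc, hU, mul_assoc _ (star _) _]

end IsHermitian

theorem sum_eigenvalues_le_of_bistochastic [Fintype κ] {σ τ : Matrix ι ι 𝕜}
    (hσ : σ.IsHermitian) (hτ : τ.IsHermitian) {f : κ → Matrix ι ι 𝕜}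
    (hf₁ : ∑ k, (f k)ᴴ * f k = 1) (hf₂ : ∑ k, f k * (f k)ᴴ = 1)
    (hτσ : τ = ∑ k, f k * σ * (f k)ᴴ) {S S' : Finset ι} (hcard : #S = #S')
    (hS' : ∀ i ∈ S', ∀ j ∉ S', hσ.eigenvalues j ≤ hσ.eigenvalues i) :
    ∑ i ∈ S, hτ.eigenvalues i ≤ ∑ i ∈ S', hσ.eigenvalues i := by
  set P := hτ.eigenprojection S
  calc ∑ i ∈ S, hτ.eigenvalues i = RCLike.re (P * τ).trace := by
        simp [P, hτ.trace_eigenprojection_mul]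
    _ = RCLike.re ((∑ k, (f k)ᴴ * P * f k) * σ).trace := by
        rw [hτσ, trace_mul_sum_mul_mul_conjTranspose]
    _ ≤ ∑ i ∈ S', hσ.eigenvalues i :=
        hσ.re_trace_mul_le_sum_eigenvalues
          (sum_conjTranspose_mul_mul_nonneg (hτ.eigenprojection_nonneg S))
          (sum_conjTranspose_mul_mul_le_one hf₁ (hτ.eigenprojection_le_one S))
          (by rw [trace_sum_conjTranspose_mul_mul f hf₂, hτ.trace_eigenprojection, hcard]) hS'

end Matrix

open Matrix in
theorem bistochastic_measurement_majorized_general {n m : ℕ} (σ : Matrix (Fin n) (Fin n) ℂ)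
    (hσ : σ.PosSemidef)
    (f : Fin m → Matrix (Fin n) (Fin n) ℂ)
    (hpovm : ∑ k, (f k)ᴴ * f k = 1) (hbis : ∑ k, f k * (f k)ᴴ = 1)
    (τ : Matrix (Fin n) (Fin n) ℂ) (hτ : τ = ∑ k, f k * σ * (f k)ᴴ)
    (hτh : τ.IsHermitian) :
    Majorizes (hσ.1.eigenvalues) (hτh.eigenvalues) := by
  refine ⟨fun k => ?_, ?_⟩
  · rw [sum_filter_lt_sortDesc, sum_filter_lt_sortDesc]
    exact sum_eigenvalues_le_of_bistochastic hσ.1 hτh hpovm hbis hτ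
      (by rw [card_topSet, card_topSet]) fun i hi j hj => le_of_mem_topSet_of_notMem hi hj
  · have htrace : τ.trace = σ.trace := hτ ▸ trace_sum_mul_mul_conjTranspose f hpovm σ
    rw [hσ.1.trace_eq_sum_eigenvalues, hτh.trace_eq_sum_eigenvalues] at htrace
    exact_mod_cast htrace.symm

open Matrix in
/-- For a bi-stochastic measurement `{f k}` and a density matrix `σ`, the spectrum of `σ`
majorizes the spectrum of `τ = ∑ k, f k * σ * (f k)ᴴ`. -/
theorem bistochastic_measurement_majorized {n m : ℕ} (σ : Matrix (Fin n) (Fin n) ℂ)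
    (hσ : σ.PosSemidef) (hσtr : σ.trace = 1)
    (f : Fin m → Matrix (Fin n) (Fin n) ℂ)
    (hpovm : ∑ k, (f k)ᴴ * f k = 1) (hbis : ∑ k, f k * (f k)ᴴ = 1)
    (τ : Matrix (Fin n) (Fin n) ℂ) (hτ : τ = ∑ k, f k * σ * (f k)ᴴ)
    (hτh : τ.IsHermitian) :
    Majorizes (hσ.1.eigenvalues) (hτh.eigenvalues) :=
  bistochastic_measurement_majorized_general σ hσ f hpovm hbis τ hτ hτh
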